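/- arXiv:1608.04111 — 3 statements merged into one kernel-verified Lean document; each statement's English description precedes it below -/
import Mathlib

section
/- Let t ≥ 1 and k ≥ 1 be integers and x ≥ 2. Then ∑_{1 ≤ D ≤ x} τ(D)^{2k} · gcd(D, t)/D ≪ τ(t)^{2k+1} · (log x)^{4^k}, where the implied constant depends only on k. -/
/-!
Write `D = s * d` with `s = gcd(D, t)`. Since `τ` is submultiplicative, the term of `D` is at
most `τ(s)^{2k} · τ(d)^{2k} / d`, and `D ↦ (s, d)` is injective with `s ∣ t`, so the sum is at
most `(∑_{s ∣ t} τ(s)^{2k}) · ∑_{d ≤ x} τ(d)^{2k} / d ≤ τ(t)^{2k+1} · ∑_{d ≤ x} τ(d)^{2k} / d`.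
Writing `τ(n)^{m+1} = ∑_{ab = n} τ(n)^m ≤ ∑_{ab = n} τ(a)^m τ(b)^m` shows that the
`(m+1)`-st moment `∑_{n ≤ N} τ(n)^{m+1} / n` is at most the square of the `m`-th, so by induction
`∑_{n ≤ x} τ(n)^m / n ≤ H_⌊x⌋^{2^m} ≪ (log x)^{2^m}`.
-/

open Finset

namespace Nat

theorem card_divisors_mul_le (m n : ℕ) : #(m * n).divisors ≤ #m.divisors * #n.divisors := by
  rw [divisors_mul]
  exact card_mul_le

theorem sum_card_divisors_pow_le (j t : ℕ) :
    ∑ s ∈ t.divisors, #s.divisors ^ j ≤ #t.divisors ^ (j + 1) := by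
  calc ∑ s ∈ t.divisors, #s.divisors ^ j
      ≤ ∑ _s ∈ t.divisors, #t.divisors ^ j := by
        refine sum_le_sum fun s hs => ?_
        obtain ⟨hst, ht⟩ := mem_divisors.1 hs
        gcongr
    _ = #t.divisors ^ (j + 1) := by rw [sum_const, smul_eq_mul, _root_.pow_succ']

theorem card_divisorsAntidiagonal (n : ℕ) : #n.divisorsAntidiagonal = #n.divisors := by
  rw [← map_div_right_divisors, card_map]

theorem sum_Icc_sum_divisorsAntidiagonal_le {M : Type*} [AddCommMonoid M] [PartialOrder M]
    [IsOrderedAddMonoid M] {f : ℕ × ℕ → M} (hf : ∀ p, 0 ≤ f p) (N : ℕ) :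
    ∑ n ∈ Icc 1 N, ∑ p ∈ n.divisorsAntidiagonal, f p ≤ ∑ p ∈ Icc 1 N ×ˢ Icc 1 N, f p := by
  have hdisj : (Icc 1 N : Set ℕ).PairwiseDisjoint divisorsAntidiagonal :=
    fun n _ n' _ hne => disjoint_left.2 fun p hp hp' =>
      hne ((mem_divisorsAntidiagonal.1 hp).1.symm.trans (mem_divisorsAntidiagonal.1 hp').1)
  rw [← sum_biUnion hdisj]
  refine sum_le_sum_of_subset_of_nonneg (fun p hp => ?_) fun p _ _ => hf p
  obtain ⟨n, hn, hp⟩ := mem_biUnion.1 hp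
  obtain ⟨hpn, hn0⟩ := mem_divisorsAntidiagonal.1 hp
  have h1 : p.1 ≠ 0 := left_ne_zero_of_mul (hpn ▸ hn0)
  have h2 : p.2 ≠ 0 := right_ne_zero_of_mul (hpn ▸ hn0)
  have hN : p.1 * p.2 ≤ N := hpn ▸ (mem_Icc.1 hn).2
  simp only [mem_product, mem_Icc]
  exact ⟨⟨one_le_iff_ne_zero.2 h1, le_of_mul_le_of_one_le_left hN (one_le_iff_ne_zero.2 h2)⟩,
    ⟨one_le_iff_ne_zero.2 h2, le_of_mul_le_of_one_le_right hN (one_le_iff_ne_zero.2 h1)⟩⟩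

theorem sum_card_divisors_pow_succ_div_le (m N : ℕ) :
    ∑ n ∈ Icc 1 N, (#n.divisors : ℝ) ^ (m + 1) / n ≤
      (∑ n ∈ Icc 1 N, (#n.divisors : ℝ) ^ m / n) ^ 2 := by
  have hterm : ∀ n : ℕ, ∀ p ∈ n.divisorsAntidiagonal, (#n.divisors : ℝ) ^ m / n ≤
      (#p.1.divisors : ℝ) ^ m / p.1 * ((#p.2.divisors : ℝ) ^ m / p.2) := by
    rintro n ⟨a, b⟩ hp
    obtain ⟨rfl, -⟩ := mem_divisorsAntidiagonal.1 hp
    dsimp only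
    rw [_root_.div_mul_div_comm, ← mul_pow, cast_mul]
    gcongr
    exact_mod_cast card_divisors_mul_le a b
  calc ∑ n ∈ Icc 1 N, (#n.divisors : ℝ) ^ (m + 1) / n
      = ∑ n ∈ Icc 1 N, ∑ _p ∈ n.divisorsAntidiagonal, (#n.divisors : ℝ) ^ m / n := by
        refine sum_congr rfl fun n _ => ?_
        rw [sum_const, card_divisorsAntidiagonal, nsmul_eq_mul, _root_.pow_succ', mul_div_assoc]
    _ ≤ ∑ n ∈ Icc 1 N, ∑ p ∈ n.divisorsAntidiagonal,
          (#p.1.divisors : ℝ) ^ m / p.1 * ((#p.2.divisors : ℝ) ^ m / p.2) :=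
        sum_le_sum fun n _ => sum_le_sum (hterm n)
    _ ≤ ∑ p ∈ Icc 1 N ×ˢ Icc 1 N,
          (#p.1.divisors : ℝ) ^ m / p.1 * ((#p.2.divisors : ℝ) ^ m / p.2) :=
        sum_Icc_sum_divisorsAntidiagonal_le (fun _ => by positivity) N
    _ = (∑ n ∈ Icc 1 N, (#n.divisors : ℝ) ^ m / n) ^ 2 := by
        rw [sq, sum_mul_sum, sum_product]

theorem sum_card_divisors_pow_div_le_harmonic_pow (m N : ℕ) :
    ∑ n ∈ Icc 1 N, (#n.divisors : ℝ) ^ m / n ≤ (harmonic N : ℝ) ^ 2 ^ m := by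
  induction m with
  | zero => simp [harmonic_eq_sum_Icc]
  | succ m ih =>
    calc ∑ n ∈ Icc 1 N, (#n.divisors : ℝ) ^ (m + 1) / n
        ≤ (∑ n ∈ Icc 1 N, (#n.divisors : ℝ) ^ m / n) ^ 2 := sum_card_divisors_pow_succ_div_le m N
      _ ≤ ((harmonic N : ℝ) ^ 2 ^ m) ^ 2 := by gcongr
      _ = (harmonic N : ℝ) ^ 2 ^ (m + 1) := by rw [← pow_mul, pow_succ]

theorem sum_card_divisors_pow_mul_gcd_div_le (j t N : ℕ) (ht : t ≠ 0) :
    ∑ D ∈ Icc 1 N, (#D.divisors : ℝ) ^ j * D.gcd t / D ≤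
      (∑ s ∈ t.divisors, (#s.divisors : ℝ) ^ j) * ∑ d ∈ Icc 1 N, (#d.divisors : ℝ) ^ j / d := by
  set split : ℕ → ℕ × ℕ := fun D => (D.gcd t, D / D.gcd t)
  have hsplit : ∀ D, (split D).1 * (split D).2 = D :=
    fun D => Nat.mul_div_cancel' (gcd_dvd_left D t)
  set F : ℕ × ℕ → ℝ := fun p => (#p.1.divisors : ℝ) ^ j * ((#p.2.divisors : ℝ) ^ j / p.2)
  have hterm : ∀ D ∈ Icc 1 N, (#D.divisors : ℝ) ^ j * D.gcd t / D ≤ F (split D) := by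
    intro D hD
    have hs0 : D.gcd t ≠ 0 := (gcd_pos_of_pos_left t (mem_Icc.1 hD).1).ne'
    have hτ : (#D.divisors : ℝ) ≤ #(split D).1.divisors * #(split D).2.divisors := by
      exact_mod_cast hsplit D ▸ card_divisors_mul_le (split D).1 (split D).2
    calc (#D.divisors : ℝ) ^ j * D.gcd t / D = (#D.divisors : ℝ) ^ j / (split D).2 := by
          rw [cast_div (gcd_dvd_left D t) (cast_ne_zero.2 hs0), div_div_eq_mul_div]
      _ ≤ F (split D) := by
          simp only [F, mul_div_assoc', ← mul_pow]
          gcongr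
  have hmaps : ∀ D ∈ Icc 1 N, split D ∈ t.divisors ×ˢ Icc 1 N := by
    intro D hD
    obtain ⟨hD1, hDN⟩ := mem_Icc.1 hD
    refine mem_product.2 ⟨mem_divisors.2 ⟨gcd_dvd_right D t, ht⟩, mem_Icc.2 ⟨?_, ?_⟩⟩
    · exact Nat.div_pos (gcd_le_left t hD1) (gcd_pos_of_pos_left t hD1)
    · exact (Nat.div_le_self D _).trans hDN
  calc ∑ D ∈ Icc 1 N, (#D.divisors : ℝ) ^ j * D.gcd t / D
      ≤ ∑ D ∈ Icc 1 N, F (split D) := sum_le_sum hterm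
    _ = ∑ p ∈ (Icc 1 N).image split, F p :=
        (sum_image fun a _ b _ hab => by rw [← hsplit a, ← hsplit b, hab]).symm
    _ ≤ ∑ p ∈ t.divisors ×ˢ Icc 1 N, F p :=
        sum_le_sum_of_subset_of_nonneg (image_subset_iff.2 hmaps)
          fun _ _ _ => by positivity
    _ = _ := by rw [sum_product, sum_mul_sum]

end Nat

theorem harmonic_floor_le_three_mul_log {x : ℝ} (hx : 2 ≤ x) :
    (harmonic ⌊x⌋₊ : ℝ) ≤ 3 * Real.log x := by
  have hH := harmonic_floor_le_one_add_log x (by linarith)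
  have hlog : Real.log 2 ≤ Real.log x := Real.log_le_log (by norm_num) hx
  linarith [Real.log_two_gt_d9]

open Nat in
theorem divisor_gcd_sum_bound_general (k : ℕ) :
    ∃ C : ℝ, 0 < C ∧ ∀ t : ℕ, 1 ≤ t → ∀ x : ℝ, 2 ≤ x →
      ∑ D ∈ Finset.Icc 1 ⌊x⌋₊,
          ((D.divisors.card : ℝ)) ^ (2 * k) * (Nat.gcd D t : ℝ) / (D : ℝ) ≤
        C * ((t.divisors.card : ℝ)) ^ (2 * k + 1) * Real.log x ^ (4 ^ k) := by
  refine ⟨3 ^ 4 ^ k, by positivity, fun t ht x hx => ?_⟩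
  have hτ : ∑ s ∈ t.divisors, (#s.divisors : ℝ) ^ (2 * k) ≤ (#t.divisors : ℝ) ^ (2 * k + 1) := by
    exact_mod_cast sum_card_divisors_pow_le (2 * k) t
  have hH0 : (0 : ℝ) ≤ harmonic ⌊x⌋₊ := by
    exact_mod_cast (harmonic_pos (floor_pos.2 (by linarith)).ne').le
  calc ∑ D ∈ Icc 1 ⌊x⌋₊, (#D.divisors : ℝ) ^ (2 * k) * D.gcd t / D
      ≤ (∑ s ∈ t.divisors, (#s.divisors : ℝ) ^ (2 * k)) *
          ∑ d ∈ Icc 1 ⌊x⌋₊, (#d.divisors : ℝ) ^ (2 * k) / d :=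
        sum_card_divisors_pow_mul_gcd_div_le (2 * k) t ⌊x⌋₊ (by omega)
    _ ≤ (#t.divisors : ℝ) ^ (2 * k + 1) * (harmonic ⌊x⌋₊ : ℝ) ^ 2 ^ (2 * k) :=
        mul_le_mul hτ (sum_card_divisors_pow_div_le_harmonic_pow (2 * k) ⌊x⌋₊)
          (sum_nonneg fun d _ => by positivity) (by positivity)
    _ ≤ (#t.divisors : ℝ) ^ (2 * k + 1) * (3 * Real.log x) ^ 2 ^ (2 * k) := by
        gcongr
        exact harmonic_floor_le_three_mul_log hx
    _ = 3 ^ 4 ^ k * (#t.divisors : ℝ) ^ (2 * k + 1) * Real.log x ^ 4 ^ k := by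
        rw [pow_mul, show (2 : ℕ) ^ 2 = 4 from rfl, mul_pow]
        ring

theorem divisor_gcd_sum_bound (k : ℕ) (hk : 1 ≤ k) :
    ∃ C : ℝ, 0 < C ∧ ∀ t : ℕ, 1 ≤ t → ∀ x : ℝ, 2 ≤ x →
      ∑ D ∈ Finset.Icc 1 ⌊x⌋₊,
          ((D.divisors.card : ℝ)) ^ (2 * k) * (Nat.gcd D t : ℝ) / (D : ℝ) ≤
        C * ((t.divisors.card : ℝ)) ^ (2 * k + 1) * Real.log x ^ (4 ^ k) :=
  divisor_gcd_sum_bound_general k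
end

section
/- Let q = u·v with gcd(u, v) = 1, let b be coprime to u, a coprime to q, and let v̄ satisfy v̄·v ≡ 1 (mod u). Then ∑_{1 ≤ c ≤ q, gcd(c,q)=1, c ≡ b (mod u)} e(ac/q) = μ(v) · e(a·b·v̄/u), where e(x) = exp(2πi x) and μ is the Möbius function. If instead gcd(u, v) > 1 (with u = gcd of the modulus condition), the sum vanishes. -/
/-!
Identify `c ∈ [1, q]` with residues `x ∈ ZMod q`; the sum becomes `∑ ψ (a x)` over the units `x`
lying over `b` mod `u`, with `ψ` the standard additive character of `ZMod q`. For `x ≡ b (mod u)`,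
`x` is a unit iff `gcd (x, v) = 1`, so Möbius inversion writes the sum as `∑_{d ∣ v} μ d • S d`,
where `S d` runs over `x ≡ b (mod u)`, `x ≡ 0 (mod d)`. For `d < v` that set is invariant under
translation by `u d`, which multiplies `ψ (a ·)` by `ψ (a u d) ≠ 1`, so `S d = 0`. For `d = v` the
two congruences force `x = b v̄ v` by the Chinese remainder theorem when `gcd (u, v) = 1`, and are
incompatible otherwise, since `gcd (u, v)` would divide `b`.
-/

open ArithmeticFunction Finset
open scoped ArithmeticFunction.Moebius

theorem AddChar.sum_filter_eq_zero_of_add_invariant {G R : Type*} [AddGroup G] [Fintype G]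
    [CommRing R] [IsDomain R] (ψ : AddChar G R) {p : G → Prop} [DecidablePred p] {s : G}
    (hp : ∀ x, p (x + s) ↔ p x) (hs : ψ s ≠ 1) : ∑ x with p x, ψ x = 0 := by
  have h : ψ s * ∑ x with p x, ψ x = ∑ x with p x, ψ x := by
    rw [mul_sum, sum_filter, sum_filter]
    exact Fintype.sum_equiv (Equiv.addRight s) _ _ fun x => by
      simp [hp, AddChar.map_add_eq_mul, mul_comm]
  exact (mul_left_eq_self₀.mp h).resolve_left hs

theorem ArithmeticFunction.sum_divisors_filter_dvd_moebius {m n : ℕ} (hn : n ≠ 0) :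
    ∑ d ∈ n.divisors with d ∣ m, μ d = if m.Coprime n then 1 else 0 := by
  have : {d ∈ n.divisors | d ∣ m} = (n.gcd m).divisors := by
    rw [← Nat.divisors_filter_dvd_of_dvd hn (Nat.gcd_dvd_left n m)]
    exact filter_congr fun d hd =>
      (Nat.dvd_gcd_iff.trans (and_iff_right (Nat.dvd_of_mem_divisors hd))).symm
  rw [this, ← coe_mul_zeta_apply, moebius_mul_coe_zeta, one_apply, Nat.gcd_comm]

theorem ArithmeticFunction.sum_filter_coprime_eq_sum_moebius_smul {ι M : Type*} [AddCommGroup M]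
    (s : Finset ι) (f : ι → ℕ) (g : ι → M) {n : ℕ} (hn : n ≠ 0) :
    ∑ i ∈ s with (f i).Coprime n, g i = ∑ d ∈ n.divisors, μ d • ∑ i ∈ s with d ∣ f i, g i := by
  simp_rw [smul_sum, sum_filter]
  rw [sum_comm]
  refine sum_congr rfl fun i _ => ?_
  rw [← sum_filter, ← sum_smul, sum_divisors_filter_dvd_moebius hn]
  split_ifs <;> simp

theorem ZMod.sum_Icc_one_natCast {M : Type*} [AddCommMonoid M] (n : ℕ) [NeZero n]
    (g : ZMod n → M) : ∑ c ∈ Icc 1 n, g c = ∑ x, g x := by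
  refine sum_nbij' (fun c => (c : ZMod n)) (fun x => (x - 1).val + 1) (by simp)
    (fun x _ => by simpa [Nat.succ_le_iff] using (x - 1).val_lt) (fun c hc => ?_)
    (fun x _ => by simp) (fun _ _ => rfl)
  obtain ⟨hc1, hcn⟩ := mem_Icc.mp hc
  have : ((c : ZMod n) - 1) = ((c - 1 : ℕ) : ZMod n) := by rw [Nat.cast_sub hc1, Nat.cast_one]
  simp only [this, ZMod.val_natCast_of_lt (by omega : c - 1 < n)]
  omega

namespace ZMod

theorem isUnit_iff_isUnit_cast_and_coprime_val {u v : ℕ} [NeZero (u * v)] (x : ZMod (u * v)) :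
    IsUnit x ↔ IsUnit (x.cast : ZMod u) ∧ x.val.Coprime v := by
  conv_lhs => rw [← natCast_zmod_val x]
  rw [isUnit_iff_coprime, Nat.coprime_mul_iff_right, ← natCast_val, isUnit_iff_coprime]

theorem cast_eq_zero_iff_dvd_val {n d : ℕ} [NeZero n] (x : ZMod n) :
    (x.cast : ZMod d) = 0 ↔ d ∣ x.val := by
  rw [← natCast_val, natCast_eq_zero_iff]

theorem gcd_dvd_of_cast_eq {n u v b : ℕ} [NeZero n] {x : ZMod n}
    (hxu : (x.cast : ZMod u) = b) (hxv : (x.cast : ZMod v) = 0) : u.gcd v ∣ b := by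
  have hu : x.val ≡ b [MOD u] := by rw [← natCast_eq_natCast_iff, natCast_val, hxu]
  have hv : v ∣ x.val := (cast_eq_zero_iff_dvd_val x).mp hxv
  exact ((hu.of_dvd (Nat.gcd_dvd_left u v)).dvd_iff dvd_rfl).mp ((Nat.gcd_dvd_right u v).trans hv)

theorem eq_of_cast_eq_of_coprime {u v : ℕ} [NeZero (u * v)] (h : u.Coprime v) {x y : ZMod (u * v)}
    (hu : (x.cast : ZMod u) = y.cast) (hv : (x.cast : ZMod v) = y.cast) : x = y := by
  rw [← natCast_zmod_val x, ← natCast_zmod_val y, natCast_eq_natCast_iff,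
    ← Nat.modEq_and_modEq_iff_modEq_mul h, ← natCast_eq_natCast_iff, ← natCast_eq_natCast_iff]
  simp only [natCast_val]
  exact ⟨hu, hv⟩

theorem sum_stdAddChar_filter_cast_eq_zero {u v d : ℕ} [NeZero (u * v)] {a : ZMod (u * v)}
    (ha : IsUnit a) (β : ZMod u) (hd : d ∣ v) (hdv : d ≠ v) :
    ∑ x : ZMod (u * v) with x.cast = β ∧ (x.cast : ZMod d) = 0, stdAddChar (a * x) = 0 := by
  have hu : 0 < u := Nat.pos_of_ne_zero (left_ne_zero_of_mul (NeZero.ne (u * v)))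
  set s : ZMod (u * v) := ((u * d : ℕ) : ZMod (u * v))
  have hs {m : ℕ} (hm : m ∣ u * v) (hm' : m ∣ u * d) : (s.cast : ZMod m) = 0 := by
    rw [cast_natCast hm, natCast_eq_zero_iff]
    exact hm'
  refine (stdAddChar.mulShift a).sum_filter_eq_zero_of_add_invariant (s := s) (fun x => ?_) ?_
  · rw [cast_add (dvd_mul_right u v), cast_add (hd.trans (dvd_mul_left v u)),
      hs (dvd_mul_right u v) (dvd_mul_right u d),
      hs (hd.trans (dvd_mul_left v u)) (dvd_mul_left d u), add_zero, add_zero]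
  · rw [AddChar.mulShift_apply, ← AddChar.map_zero_eq_one (stdAddChar (N := u * v)),
      injective_stdAddChar.ne_iff, ne_eq, ha.mul_right_eq_zero, natCast_eq_zero_iff,
      Nat.mul_dvd_mul_iff_left hu]
    exact fun hvd => hdv (Nat.dvd_antisymm hd hvd)

theorem sum_stdAddChar_filter_isUnit_cast_eq {u v : ℕ} [NeZero (u * v)] {a : ZMod (u * v)}
    (ha : IsUnit a) {β : ZMod u} (hβ : IsUnit β) :
    ∑ x : ZMod (u * v) with IsUnit x ∧ x.cast = β, stdAddChar (a * x)
      = μ v • ∑ x : ZMod (u * v) with x.cast = β ∧ (x.cast : ZMod v) = 0, stdAddChar (a * x) := by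
  have hv : v ≠ 0 := right_ne_zero_of_mul (NeZero.ne (u * v))
  calc ∑ x : ZMod (u * v) with IsUnit x ∧ x.cast = β, stdAddChar (a * x)
      = ∑ x ∈ univ.filter (fun x : ZMod (u * v) => x.cast = β) with x.val.Coprime v,
          stdAddChar (a * x) := by
        rw [filter_filter]
        refine sum_congr (filter_congr fun x _ => ?_) fun _ _ => rfl
        rw [isUnit_iff_isUnit_cast_and_coprime_val]
        constructor
        · rintro ⟨⟨-, hx⟩, hxβ⟩
          exact ⟨hxβ, hx⟩
        · rintro ⟨hxβ, hx⟩
          exact ⟨⟨hxβ ▸ hβ, hx⟩, hxβ⟩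
    _ = ∑ d ∈ v.divisors, μ d • ∑ x ∈ univ.filter (fun x : ZMod (u * v) => x.cast = β)
          with d ∣ x.val, stdAddChar (a * x) :=
        sum_filter_coprime_eq_sum_moebius_smul _ _ _ hv
    _ = _ := by
        simp_rw [filter_filter, ← cast_eq_zero_iff_dvd_val (n := u * v)]
        refine sum_eq_single_of_mem v (Nat.mem_divisors_self v hv) fun d hd hdv => ?_
        rw [sum_stdAddChar_filter_cast_eq_zero ha β (Nat.dvd_of_mem_divisors hd) hdv, smul_zero]

theorem filter_cast_eq_and_cast_eq_zero_eq_singleton {u v : ℕ} [NeZero (u * v)]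
    (h : u.Coprime v) {vbar : ℤ} (hvbar : vbar * v ≡ 1 [ZMOD u]) (β : ℤ) :
    ({x | (x.cast : ZMod u) = β ∧ (x.cast : ZMod v) = 0} : Finset (ZMod (u * v)))
      = {((β * vbar * v : ℤ) : ZMod (u * v))} := by
  set x₀ : ZMod (u * v) := ((β * vbar * v : ℤ) : ZMod (u * v))
  have hvbar' : ((vbar * v : ℤ) : ZMod u) = 1 := by
    rw [← Int.cast_one, intCast_eq_intCast_iff]
    exact hvbar
  have hx₀u : (x₀.cast : ZMod u) = β := by
    rw [cast_intCast (dvd_mul_right u v), mul_assoc, Int.cast_mul, hvbar', mul_one]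
  have hx₀v : (x₀.cast : ZMod v) = 0 := by
    rw [cast_intCast (dvd_mul_left v u)]
    push_cast
    rw [natCast_self, mul_zero]
  ext x
  simp only [mem_filter, mem_univ, true_and, mem_singleton]
  constructor
  · rintro ⟨hu, hv⟩
    exact eq_of_cast_eq_of_coprime h (hu.trans hx₀u.symm) (hv.trans hx₀v.symm)
  · rintro rfl
    exact ⟨hx₀u, hx₀v⟩

end ZMod

theorem sum_exp_filter_coprime_eq_sum_stdAddChar {n u : ℕ} [NeZero n] (hu : u ∣ n) (a b : ℕ) :
    ∑ c ∈ (Finset.Icc 1 n).filter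
        (fun c => Nat.Coprime c n ∧ (c : ℤ) ≡ (b : ℤ) [ZMOD (u : ℤ)]),
      Complex.exp (2 * Real.pi * Complex.I * ((a : ℝ) * (c : ℝ) / (n : ℝ)))
      = ∑ x : ZMod n with IsUnit x ∧ x.cast = (b : ZMod u), ZMod.stdAddChar ((a : ZMod n) * x) := by
  rw [sum_filter, sum_filter, ← ZMod.sum_Icc_one_natCast]
  refine sum_congr rfl fun c _ => ?_
  have hcond : IsUnit (c : ZMod n) ∧ ((c : ZMod n).cast : ZMod u) = b
      ↔ c.Coprime n ∧ (c : ℤ) ≡ b [ZMOD u] := by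
    rw [ZMod.isUnit_iff_coprime, ZMod.cast_natCast hu, ← ZMod.intCast_eq_intCast_iff,
      Int.cast_natCast, Int.cast_natCast]
  have hval : ZMod.stdAddChar ((a : ZMod n) * (c : ZMod n))
      = Complex.exp (2 * Real.pi * Complex.I * ((a : ℝ) * (c : ℝ) / (n : ℝ))) := by
    rw [← Nat.cast_mul, ← Int.cast_natCast, ZMod.stdAddChar_coe]
    push_cast
    ring_nf
  exact (if_congr hcond hval rfl).symm

theorem ramanujan_type_sum (q u v a b : ℕ) (hq : q = u * v) (hu : 0 < u) (hv : 0 < v)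
    (hb : Nat.Coprime b u) (ha : Nat.Coprime a q) :
    (Nat.Coprime u v → ∀ vbar : ℤ, vbar * (v : ℤ) ≡ 1 [ZMOD (u : ℤ)] →
      ∑ c ∈ (Finset.Icc 1 q).filter
          (fun c => Nat.Coprime c q ∧ (c : ℤ) ≡ (b : ℤ) [ZMOD (u : ℤ)]),
        Complex.exp (2 * Real.pi * Complex.I * ((a : ℝ) * (c : ℝ) / (q : ℝ)))
      = ((ArithmeticFunction.moebius v : ℤ) : ℂ) *
        Complex.exp (2 * Real.pi * Complex.I * ((a : ℝ) * (b : ℝ) * (vbar : ℝ) / (u : ℝ)))) ∧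
    (¬ Nat.Coprime u v →
      ∑ c ∈ (Finset.Icc 1 q).filter
          (fun c => Nat.Coprime c q ∧ (c : ℤ) ≡ (b : ℤ) [ZMOD (u : ℤ)]),
        Complex.exp (2 * Real.pi * Complex.I * ((a : ℝ) * (c : ℝ) / (q : ℝ))) = 0) := by
  subst hq
  have : NeZero (u * v) := ⟨(Nat.mul_pos hu hv).ne'⟩
  rw [sum_exp_filter_coprime_eq_sum_stdAddChar (dvd_mul_right u v),
    ZMod.sum_stdAddChar_filter_isUnit_cast_eq ((ZMod.isUnit_iff_coprime a _).mpr ha)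
      ((ZMod.isUnit_iff_coprime b u).mpr hb)]
  refine ⟨fun huv vbar hvbar => ?_, fun huv => ?_⟩
  · rw [← Int.cast_natCast b, ZMod.filter_cast_eq_and_cast_eq_zero_eq_singleton huv hvbar,
      sum_singleton, zsmul_eq_mul, ← Int.cast_natCast a, ← Int.cast_mul, ZMod.stdAddChar_coe]
    congr 2
    have hv' : (v : ℂ) ≠ 0 := Nat.cast_ne_zero.mpr hv.ne'
    push_cast
    field_simp
  · rw [filter_false_of_mem fun x _ ⟨hxu, hxv⟩ => huv <|
      (hb.coprime_dvd_left (ZMod.gcd_dvd_of_cast_eq hxu hxv)).eq_one_of_dvd (Nat.gcd_dvd_left u v),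
      sum_empty, smul_zero]
end

section
/- Let D, q be positive integers and a coprime to q. If r ranges over 1 ≤ r ≤ D and we write r/D + a/q = s_r/t_r in lowest terms, then for any fixed t, the number of r with t_r = t is at most gcd(D, t). -/
theorem denominator_multiplicity_bound (D q a t : ℕ) (hD : 0 < D) (hq : 0 < q)
    (ha : Nat.Coprime a q) :
    ((Finset.Icc 1 D).filter
        (fun r => D * q / Nat.gcd (r * q + a * D) (D * q) = t)).card ≤ Nat.gcd D t := by
  set S := (Finset.Icc 1 D).filter
      (fun r => D * q / Nat.gcd (r * q + a * D) (D * q) = t) with hS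
  rcases S.eq_empty_or_nonempty with h | ⟨r0, hr0⟩
  · simp [h]
  -- basic facts about elements of S
  have hDq : 0 < D * q := Nat.mul_pos hD hq
  have key : ∀ r ∈ S, Nat.gcd (r * q + a * D) (D * q) * t = D * q := by
    intro r hr
    have hmem := (Finset.mem_filter.mp hr).2
    have hdvd : Nat.gcd (r * q + a * D) (D * q) ∣ D * q := Nat.gcd_dvd_right _ _
    calc Nat.gcd (r * q + a * D) (D * q) * t
        = Nat.gcd (r * q + a * D) (D * q) * (D * q / Nat.gcd (r * q + a * D) (D * q)) := by
          rw [hmem]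
      _ = D * q := Nat.mul_div_cancel' hdvd
  -- define m
  set G := Nat.gcd (r0 * q + a * D) (D * q) with hG
  have hGt : G * t = D * q := key r0 hr0
  have hGpos : 0 < G := Nat.gcd_pos_of_pos_right _ hDq
  have ht : 0 < t := by
    rcases Nat.eq_zero_or_pos t with h0 | h0
    · rw [h0, Nat.mul_zero] at hGt; omega
    · exact h0
  -- all elements of S have the same gcd, equal to G
  have hsame : ∀ r ∈ S, Nat.gcd (r * q + a * D) (D * q) = G := by
    intro r hr
    have := key r hr
    have := hGt
    exact Nat.eq_of_mul_eq_mul_right ht (by omega)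
  -- G divides r*q + a*D for all r in S
  have hGdvd : ∀ r ∈ S, G ∣ r * q + a * D := by
    intro r hr
    rw [← hsame r hr]; exact Nat.gcd_dvd_left _ _
  set gm := Nat.gcd G q with hgm
  have hgmpos : 0 < gm := Nat.gcd_pos_of_pos_left q hGpos
  set d := G / gm with hd
  have hdgm : d * gm = G := Nat.div_mul_cancel (Nat.gcd_dvd_left G q)
  -- key arithmetic: t * gm = q * gcd D t
  have harith : t * gm = q * Nat.gcd D t := by
    have h1 : Nat.gcd (t * G) (t * q) = t * gm := Nat.gcd_mul_left t G q
    rw [Nat.mul_comm t G, hGt] at h1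
    have h2 : Nat.gcd (D * q) (t * q) = Nat.gcd D t * q := Nat.gcd_mul_right D q t
    rw [Nat.mul_comm q]
    omega
  -- d * gcd D t = D
  have hdg : d * Nat.gcd D t = D := by
    have h2 : d * (q * Nat.gcd D t) = D * q := by
      rw [← harith]
      calc d * (t * gm) = d * gm * t := by ring
        _ = G * t := by rw [hdgm]
        _ = D * q := hGt
    have h3 : d * Nat.gcd D t * q = D * q := by rw [← h2]; ring
    exact Nat.eq_of_mul_eq_mul_right hq h3
  have hgpos : 0 < Nat.gcd D t := Nat.gcd_pos_of_pos_left t hD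
  have hdpos : 0 < d := by
    by_contra h
    push_neg at h
    interval_cases d <;> omega
  -- coprimality of d with q / gm
  have hco : Nat.Coprime d (q / gm) := Nat.coprime_div_gcd_div_gcd hgmpos
  -- divisibility: for r r' in S with r' ≤ r, d ∣ r - r'
  have hdvd2 : ∀ r ∈ S, ∀ r' ∈ S, r' ≤ r → d ∣ r - r' := by
    intro r hr r' hr' hle
    have h1 : G ∣ (r - r') * q := by
      have := hGdvd r hr
      have := hGdvd r' hr'
      have hsub : (r - r') * q = (r * q + a * D) - (r' * q + a * D) := by
        rw [Nat.sub_mul]; omega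
      rw [hsub]
      exact Nat.dvd_sub (hGdvd r hr) (hGdvd r' hr')
    have hq' : (q / gm) * gm = q := Nat.div_mul_cancel (Nat.gcd_dvd_right G q)
    have h2 : d * gm ∣ (r - r') * (q / gm) * gm := by
      rw [hdgm, Nat.mul_assoc, hq']; exact h1
    have h3 : d ∣ (r - r') * (q / gm) := by
      rcases h2 with ⟨c, hc⟩
      exact ⟨c, Nat.eq_of_mul_eq_mul_right hgmpos (by linarith [hc])⟩
    exact hco.dvd_of_dvd_mul_right h3
  -- injection into Finset.range (gcd D t) via r ↦ (r-1)/d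
  have hinj : Set.InjOn (fun r => (r - 1) / d) S := by
    intro r hr r' hr' hf
    have hf' : (r - 1) / d = (r' - 1) / d := hf
    have hr1 : 1 ≤ r := (Finset.mem_Icc.mp (Finset.mem_filter.mp hr).1).1
    have hr1' : 1 ≤ r' := (Finset.mem_Icc.mp (Finset.mem_filter.mp hr').1).1
    rcases le_total r' r with hle | hle
    · have hdd := hdvd2 r hr r' hr' hle
      have e1 := Nat.div_add_mod (r - 1) d
      have e2 := Nat.div_add_mod (r' - 1) d
      have m1 : (r - 1) % d < d := Nat.mod_lt _ hdpos
      have m2 : (r' - 1) % d < d := Nat.mod_lt _ hdpos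
      rcases hdd with ⟨c, hc⟩
      rw [hf'] at e1
      rcases Nat.eq_zero_or_pos c with rfl | h0
      · omega
      · have : d ≤ d * c := Nat.le_mul_of_pos_right d h0
        omega
    · have hdd := hdvd2 r' hr' r hr hle
      have e1 := Nat.div_add_mod (r - 1) d
      have e2 := Nat.div_add_mod (r' - 1) d
      have m1 : (r - 1) % d < d := Nat.mod_lt _ hdpos
      have m2 : (r' - 1) % d < d := Nat.mod_lt _ hdpos
      rcases hdd with ⟨c, hc⟩
      rw [hf'] at e1
      rcases Nat.eq_zero_or_pos c with rfl | h0
      · omega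
      · have : d ≤ d * c := Nat.le_mul_of_pos_right d h0
        omega
  have hmaps : ∀ r ∈ S, (r - 1) / d ∈ Finset.range (Nat.gcd D t) := by
    intro r hr
    have hrD : r ≤ D := (Finset.mem_Icc.mp (Finset.mem_filter.mp hr).1).2
    have hr1 : 1 ≤ r := (Finset.mem_Icc.mp (Finset.mem_filter.mp hr).1).1
    rw [Finset.mem_range]
    have : (r - 1) / d ≤ (D - 1) / d := Nat.div_le_div_right (by omega)
    have hlt : (D - 1) / d < Nat.gcd D t := by
      rw [Nat.div_lt_iff_lt_mul hdpos]
      calc D - 1 < D := by omega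
        _ = d * Nat.gcd D t := hdg.symm
        _ = Nat.gcd D t * d := Nat.mul_comm _ _
    omega
  calc S.card ≤ (Finset.range (Nat.gcd D t)).card :=
        Finset.card_le_card_of_injOn _ hmaps hinj
    _ = Nat.gcd D t := Finset.card_range _
end
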